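/- Let Ω ⊆ ℝ^d be bounded and open, let α, β, τ > 0 and γ ≥ 0, let c : ℝ → ℝ be measurable with 0 < c̲ ≤ c(x) ≤ c̄ for all x, and let d : ℝ → ℝ be twice differentiable with |d'(x)| ≤ K and |d''(x)| ≤ d̄ for all x. Let V be a linear subspace of the space of functions ℝ^d → ℝ all of whose elements are continuously differentiable on ℝ^d, and let R ∈ V. Suppose P, Q, S, S̃ ∈ V are such that for all v ∈ V: ∫_Ω [ (c(|∇R(x)|)/τ) S(x) v(x) + α ∇S(x)·∇v(x) + γ S(x) v(x) ] dx = ∫_Ω [ (c(|∇R(x)|)/τ) R(x) v(x) − β D(P(x), R(x)) v(x) + γ P(x) v(x) ] dx, and the same identity holds with (S̃, Q) in place of (S, P). Then (∫_Ω |S − S̃|² dx)^{1/2} ≤ ((β d̄ + γ)/(c̲/τ + γ)) (∫_Ω |P − Q|² dx)^{1/2}; in particular, if τ β d̄ < c̲ then the factor (β d̄ + γ)/(c̲/τ + γ) is strictly less than 1. -/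

import Mathlib

/-!
Test both variational identities with `v = S - S̃` and subtract. On the left, coercivity of the
form gives at least `(c̲/τ + γ) ‖S - S̃‖²`, the gradient term contributing `α ‖∇(S - S̃)‖² ≥ 0`.
On the right the `R`-terms cancel, and what is left is bounded pointwise by
`(β d̄ + γ) |P - Q| |S - S̃|`, because `D(a, b)` is the mean of `d'` over the segment from `b` to
`a` and is therefore `d̄`-Lipschitz in `a`. Cauchy–Schwarz and division by `‖S - S̃‖` finish.
-/

open MeasureTheory Set
open scoped RealInnerProductSpace

/-- The difference quotient `D(a,b) = (d(a) − d(b))/(a − b)` of a differentiable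
function `d`, with `D(a,a) = d'(a)`. -/
noncomputable def diffQuot (d : ℝ → ℝ) (a b : ℝ) : ℝ :=
  if a = b then deriv d a else (d a - d b) / (a - b)

open scoped ENNReal

section DiffQuot

variable {d : ℝ → ℝ}

theorem diffQuot_self (a : ℝ) : diffQuot d a a = deriv d a := if_pos rfl

theorem diffQuot_eq_integral (hd : Differentiable ℝ d) (hd' : Continuous (deriv d)) (a b : ℝ) :
    diffQuot d a b = ∫ s in (0 : ℝ)..1, deriv d (b + (a - b) * s) := by
  rcases eq_or_ne a b with rfl | hab
  · simp [diffQuot_self]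
  · have hab' : a - b ≠ 0 := sub_ne_zero.mpr hab
    rw [intervalIntegral.integral_comp_add_mul _ hab', mul_zero, mul_one, add_zero,
      add_sub_cancel, intervalIntegral.integral_deriv_eq_sub (fun x _ => hd x)
        (hd'.intervalIntegrable _ _), diffQuot, if_neg hab, smul_eq_mul, inv_mul_eq_div]

variable (hd : Differentiable ℝ d) (hd' : Differentiable ℝ (deriv d)) {L : ℝ}
  (hL : ∀ x, |deriv (deriv d) x| ≤ L)
include hd hd' hL

theorem abs_diffQuot_sub_diffQuot_le (a b c : ℝ) :
    |diffQuot d a c - diffQuot d b c| ≤ L * |a - b| := by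
  have hlip : ∀ x y, |deriv d x - deriv d y| ≤ L * |x - y| := fun x y =>
    Convex.norm_image_sub_le_of_norm_deriv_le (fun z _ => hd' z) (fun z _ => hL z) convex_univ
      (mem_univ y) (mem_univ x)
  have hpt : ∀ s ∈ uIoc (0 : ℝ) 1,
      ‖deriv d (c + (a - c) * s) - deriv d (c + (b - c) * s)‖ ≤ L * |a - b| := by
    intro s hs
    rw [uIoc_of_le zero_le_one] at hs
    have hL0 : 0 ≤ L := (abs_nonneg _).trans (hL 0)
    calc ‖deriv d (c + (a - c) * s) - deriv d (c + (b - c) * s)‖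
        ≤ L * |(a - b) * s| := by
          rw [Real.norm_eq_abs, show (a - b) * s = c + (a - c) * s - (c + (b - c) * s) by ring]
          exact hlip _ _
      _ = L * |a - b| * s := by rw [abs_mul, abs_of_pos hs.1, mul_assoc]
      _ ≤ L * |a - b| := mul_le_of_le_one_right (by positivity) hs.2
  have hint : ∀ e, IntervalIntegrable (fun s => deriv d (c + (e - c) * s)) volume 0 1 := fun e =>
    (hd'.continuous.comp (by fun_prop)).intervalIntegrable _ _
  rw [diffQuot_eq_integral hd hd'.continuous, diffQuot_eq_integral hd hd'.continuous,
    ← intervalIntegral.integral_sub (hint a) (hint b)]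
  simpa using intervalIntegral.norm_integral_le_of_norm_le_const hpt

theorem abs_diffQuot_le (a b : ℝ) : |diffQuot d a b| ≤ |deriv d b| + L * |a - b| := by
  have := abs_diffQuot_sub_diffQuot_le hd hd' hL a b b
  rw [diffQuot_self] at this
  linarith [abs_sub_abs_le_abs_sub (diffQuot d a b) (deriv d b)]

end DiffQuot

theorem measurable_diffQuot {d : ℝ → ℝ} (hd : Measurable d) :
    Measurable fun p : ℝ × ℝ => diffQuot d p.1 p.2 :=
  Measurable.ite (measurableSet_eq_fun measurable_fst measurable_snd)
    ((measurable_deriv d).comp measurable_fst)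
    (((hd.comp measurable_fst).sub (hd.comp measurable_snd)).div
      (measurable_fst.sub measurable_snd))

section Gradient

variable {E : Type*} [NormedAddCommGroup E] [InnerProductSpace ℝ E] [CompleteSpace E]

theorem gradient_sub {f g : E → ℝ} {x : E} (hf : DifferentiableAt ℝ f x)
    (hg : DifferentiableAt ℝ g x) : gradient (f - g) x = gradient f x - gradient g x := by
  simp only [gradient, fderiv_sub hf hg, map_sub]

theorem ContDiff.continuous_gradient {f : E → ℝ} (hf : ContDiff ℝ 1 f) :
    Continuous (gradient f) :=
  (InnerProductSpace.toDual ℝ E).symm.continuous.comp (hf.continuous_fderiv one_ne_zero)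

end Gradient

theorem integral_abs_mul_abs_le {α : Type*} [MeasurableSpace α] {μ : Measure α} {f g : α → ℝ}
    (hf : MemLp f 2 μ) (hg : MemLp g 2 μ) :
    ∫ x, |f x| * |g x| ∂μ ≤ √(∫ x, |f x| ^ 2 ∂μ) * √(∫ x, |g x| ^ 2 ∂μ) := by
  have h := integral_mul_le_Lp_mul_Lq_of_nonneg Real.HolderConjugate.two_two
    (ae_of_all _ fun x => abs_nonneg (f x)) (ae_of_all _ fun x => abs_nonneg (g x))
    (by rw [ENNReal.ofReal_ofNat]; exact hf.abs) (by rw [ENNReal.ofReal_ofNat]; exact hg.abs)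
  simpa only [Real.rpow_two, ← Real.sqrt_eq_rpow] using h

theorem le_div_mul_of_mul_sq_le {k m a b : ℝ} (hk : 0 < k) (hm : 0 ≤ m) (ha : 0 ≤ a) (hb : 0 ≤ b)
    (h : k * a ^ 2 ≤ m * (b * a)) : a ≤ m / k * b := by
  rw [div_mul_eq_mul_div, le_div_iff₀ hk]
  rcases ha.eq_or_lt with rfl | ha
  · rw [zero_mul]; positivity
  · nlinarith

theorem sqrt_integral_sq_le_of_energy_bounds {α : Type*} [MeasurableSpace α] {μ : Measure α}
    {w p L₁ L₂ G₁ G₂ : α → ℝ} {k m : ℝ} (hk : 0 < k) (hm : 0 ≤ m)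
    (hw : MemLp w 2 μ) (hp : MemLp p 2 μ) (hL₁ : Integrable L₁ μ) (hL₂ : Integrable L₂ μ)
    (hG₁ : Integrable G₁ μ) (hG₂ : Integrable G₂ μ)
    (h₁ : ∫ x, L₁ x ∂μ = ∫ x, G₁ x ∂μ) (h₂ : ∫ x, L₂ x ∂μ = ∫ x, G₂ x ∂μ)
    (hlow : ∀ x, k * |w x| ^ 2 ≤ L₁ x - L₂ x) (hup : ∀ x, G₁ x - G₂ x ≤ m * (|p x| * |w x|)) :
    √(∫ x, |w x| ^ 2 ∂μ) ≤ m / k * √(∫ x, |p x| ^ 2 ∂μ) := by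
  have hw2 : Integrable (fun x => |w x| ^ 2) μ := by
    simpa using (memLp_two_iff_integrable_sq hw.1).1 hw
  have hpw : Integrable (fun x => |p x| * |w x|) μ := hp.abs.integrable_mul hw.abs
  refine le_div_mul_of_mul_sq_le hk hm (Real.sqrt_nonneg _) (Real.sqrt_nonneg _) ?_
  calc k * √(∫ x, |w x| ^ 2 ∂μ) ^ 2 = ∫ x, k * |w x| ^ 2 ∂μ := by
        rw [Real.sq_sqrt (integral_nonneg fun x => by positivity), integral_const_mul]
    _ ≤ ∫ x, (L₁ x - L₂ x) ∂μ := integral_mono (hw2.const_mul k) (hL₁.sub hL₂) hlow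
    _ = ∫ x, (G₁ x - G₂ x) ∂μ := by rw [integral_sub hL₁ hL₂, integral_sub hG₁ hG₂, h₁, h₂]
    _ ≤ ∫ x, m * (|p x| * |w x|) ∂μ := integral_mono (hG₁.sub hG₂) (hpw.const_mul m) hup
    _ ≤ m * (√(∫ x, |p x| ^ 2 ∂μ) * √(∫ x, |w x| ^ 2 ∂μ)) := by
        rw [integral_const_mul]
        exact mul_le_mul_of_nonneg_left (integral_abs_mul_abs_le hp hw) hm

theorem mul_sq_abs_le_form_sub_form {k a α γ s t : ℝ} {F : Type*} [NormedAddCommGroup F]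
    [InnerProductSpace ℝ F] {u u' : F} (hka : k ≤ a) (hα : 0 ≤ α) :
    (k + γ) * |s - t| ^ 2 ≤ (a * s * (s - t) + α * ⟪u, u - u'⟫ + γ * s * (s - t))
      - (a * t * (s - t) + α * ⟪u', u - u'⟫ + γ * t * (s - t)) := by
  have hinner : ⟪u, u - u'⟫ - ⟪u', u - u'⟫ = ‖u - u'‖ ^ 2 := by
    rw [← inner_sub_left, real_inner_self_eq_norm_sq]
  have hcoer : (k + γ) * |s - t| ^ 2 ≤ (a + γ) * (s - t) ^ 2 + α * ‖u - u'‖ ^ 2 := by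
    rw [sq_abs]
    nlinarith [sq_nonneg (s - t), sq_nonneg ‖u - u'‖]
  linear_combination hcoer - α * hinner

theorem load_sub_load_le {A β γ δ₁ δ₂ p q w L : ℝ} (hβ : 0 ≤ β) (hγ : 0 ≤ γ)
    (hδ : |δ₁ - δ₂| ≤ L * |p - q|) :
    (A - β * δ₁ * w + γ * p * w) - (A - β * δ₂ * w + γ * q * w) ≤ (β * L + γ) * (|p - q| * |w|) := by
  have hnonlin : -(β * (δ₁ - δ₂) * w) ≤ β * (L * |p - q|) * |w| := by
    have := neg_abs_le (β * (δ₁ - δ₂) * w)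
    rw [abs_mul, abs_mul, abs_of_nonneg hβ] at this
    linarith [mul_le_mul_of_nonneg_right (mul_le_mul_of_nonneg_left hδ hβ) (abs_nonneg w)]
  have hlin : γ * ((p - q) * w) ≤ γ * (|p - q| * |w|) :=
    mul_le_mul_of_nonneg_left (abs_mul (p - q) w ▸ le_abs_self _) hγ
  linear_combination hnonlin + hlin

section BoundedDomain

variable {X : Type*} [PseudoMetricSpace X] [ProperSpace X] [MeasurableSpace X]
  [OpensMeasurableSpace X] {μ : Measure X} {Ω : Set X}

theorem Continuous.memLp_top_restrict_of_isBounded {F : Type*} [NormedAddCommGroup F]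
    {f : X → F} (hf : Continuous f) (hΩ : Bornology.IsBounded Ω) :
    MemLp f ∞ (μ.restrict Ω) := by
  obtain ⟨C, hC⟩ := hΩ.isCompact_closure.exists_bound_of_continuousOn hf.continuousOn
  exact memLp_top_of_bound hf.aestronglyMeasurable C <|
    ae_restrict_of_ae_restrict_of_subset subset_closure
      (ae_restrict_of_forall_mem isClosed_closure.measurableSet hC)

theorem memLp_top_diffQuot_comp {d : ℝ → ℝ} (hd : Differentiable ℝ d)
    (hd' : Differentiable ℝ (deriv d)) {L : ℝ} (hL : ∀ x, |deriv (deriv d) x| ≤ L)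
    {P R : X → ℝ} (hP : Continuous P) (hR : Continuous R) (hΩ : Bornology.IsBounded Ω) :
    MemLp (fun x => diffQuot d (P x) (R x)) ∞ (μ.restrict Ω) := by
  have hbound : Continuous fun x => |deriv d (R x)| + L * |P x - R x| := by
    have := hd'.continuous; fun_prop
  refine (hbound.memLp_top_restrict_of_isBounded hΩ).of_le
    ((measurable_diffQuot hd.continuous.measurable).comp
      (hP.measurable.prodMk hR.measurable)).aestronglyMeasurable (ae_of_all _ fun x => ?_)
  simp only [Real.norm_eq_abs]
  exact (abs_diffQuot_le hd hd' hL _ _).trans (le_abs_self _)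

variable [IsFiniteMeasureOnCompacts μ]

theorem integrableOn_load (hΩ : Bornology.IsBounded Ω) {a δ R P v : X → ℝ}
    (ha : MemLp a ∞ (μ.restrict Ω)) (hδ : MemLp δ ∞ (μ.restrict Ω)) (hR : Continuous R)
    (hP : Continuous P) (hv : Continuous v) (β γ : ℝ) :
    IntegrableOn (fun x => a x * R x * v x - β * δ x * v x + γ * P x * v x) Ω μ := by
  have : IsFiniteMeasure (μ.restrict Ω) := isFiniteMeasure_restrict.2 hΩ.measure_lt_top.ne
  have hc : ∀ f : X → ℝ, Continuous f → MemLp f ∞ (μ.restrict Ω) := fun f hf =>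
    hf.memLp_top_restrict_of_isBounded hΩ
  refine MemLp.integrable le_top ?_
  exact (((hc v hv).mul' (r := ∞) ((hc R hR).mul' (r := ∞) ha)).sub
    ((hc v hv).mul' (r := ∞) (hδ.const_mul β))).add (hc _ (by fun_prop))

end BoundedDomain

theorem integrableOn_form {E : Type*} [NormedAddCommGroup E] [InnerProductSpace ℝ E]
    [ProperSpace E] [MeasurableSpace E] [OpensMeasurableSpace E] {μ : Measure E}
    [IsFiniteMeasureOnCompacts μ] {Ω : Set E} (hΩ : Bornology.IsBounded Ω) {a S v : E → ℝ}
    (ha : MemLp a ∞ (μ.restrict Ω)) (hS : ContDiff ℝ 1 S) (hv : ContDiff ℝ 1 v) (α γ : ℝ) :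
    IntegrableOn (fun x => a x * S x * v x + α * ⟪gradient S x, gradient v x⟫ + γ * S x * v x)
      Ω μ := by
  have : IsFiniteMeasure (μ.restrict Ω) := isFiniteMeasure_restrict.2 hΩ.measure_lt_top.ne
  have hc : ∀ f : E → ℝ, Continuous f → MemLp f ∞ (μ.restrict Ω) := fun f hf =>
    hf.memLp_top_restrict_of_isBounded hΩ
  have hgS := hS.continuous_gradient
  have hgv := hv.continuous_gradient
  refine MemLp.integrable le_top ?_
  exact (((hc v hv.continuous).mul' (r := ∞) ((hc S hS.continuous).mul' (r := ∞) ha)).add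
    (hc _ (by fun_prop))).add (hc _ (by have := hS.continuous; have := hv.continuous; fun_prop))

theorem fixed_point_iteration_contraction_general
    {n : ℕ} (Ω : Set (EuclideanSpace ℝ (Fin n)))
    (hΩb : Bornology.IsBounded Ω)
    (α β τ γ : ℝ) (hα : 0 < α) (hβ : 0 < β) (hτ : 0 < τ) (hγ : 0 ≤ γ)
    (c : ℝ → ℝ) (hcmeas : Measurable c)
    (cl cu : ℝ) (hcl : 0 < cl) (hcbound : ∀ x, cl ≤ c x ∧ c x ≤ cu)
    (d : ℝ → ℝ) (hd : Differentiable ℝ d) (hd' : Differentiable ℝ (deriv d))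
    (dbar : ℝ)
    (hd''bdd : ∀ x : ℝ, |deriv (deriv d) x| ≤ dbar)
    (V : Submodule ℝ (EuclideanSpace ℝ (Fin n) → ℝ))
    (hVsmooth : ∀ f ∈ V, ContDiff ℝ 1 f)
    (R : EuclideanSpace ℝ (Fin n) → ℝ) (hR : R ∈ V)
    (P Q S St : EuclideanSpace ℝ (Fin n) → ℝ)
    (hP : P ∈ V) (hQ : Q ∈ V) (hS : S ∈ V) (hSt : St ∈ V)
    (hvarS : ∀ v ∈ V,
      ∫ x in Ω, (c ‖gradient R x‖ / τ * S x * v x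
        + α * ⟪gradient S x, gradient v x⟫ + γ * S x * v x)
      = ∫ x in Ω, (c ‖gradient R x‖ / τ * R x * v x
        - β * diffQuot d (P x) (R x) * v x + γ * P x * v x))
    (hvarSt : ∀ v ∈ V,
      ∫ x in Ω, (c ‖gradient R x‖ / τ * St x * v x
        + α * ⟪gradient St x, gradient v x⟫ + γ * St x * v x)
      = ∫ x in Ω, (c ‖gradient R x‖ / τ * R x * v x
        - β * diffQuot d (Q x) (R x) * v x + γ * Q x * v x)) :
    Real.sqrt (∫ x in Ω, |S x - St x| ^ 2)
      ≤ (β * dbar + γ) / (cl / τ + γ) * Real.sqrt (∫ x in Ω, |P x - Q x| ^ 2) ∧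
    (τ * β * dbar < cl → (β * dbar + γ) / (cl / τ + γ) < 1) := by
  have hdbar : 0 ≤ dbar := (abs_nonneg _).trans (hd''bdd 0)
  have hC : ∀ f ∈ V, Continuous f := fun f hf => (hVsmooth f hf).continuous
  have hw : S - St ∈ V := sub_mem hS hSt
  have : IsFiniteMeasure (volume.restrict Ω) := isFiniteMeasure_restrict.2 hΩb.measure_lt_top.ne
  have hL2 : ∀ f ∈ V, ∀ g ∈ V, MemLp (fun x => f x - g x) 2 (volume.restrict Ω) :=
    fun f hf g hg => (((hC f hf).sub (hC g hg)).memLp_top_restrict_of_isBounded hΩb).mono_exponent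
      le_top
  have ha : MemLp (fun x => c ‖gradient R x‖ / τ) ∞ (volume.restrict Ω) := by
    refine memLp_top_of_bound ((hcmeas.comp (hVsmooth R hR).continuous_gradient.norm.measurable
      ).div_const τ).aestronglyMeasurable (cu / τ) (ae_of_all _ fun x => ?_)
    rw [Real.norm_eq_abs, abs_div, abs_of_pos hτ]
    gcongr
    exact abs_le.2 ⟨by linarith [hcbound (‖gradient R x‖)], (hcbound _).2⟩
  have hδ : ∀ f ∈ V, MemLp (fun x => diffQuot d (f x) (R x)) ∞ (volume.restrict Ω) :=
    fun f hf => memLp_top_diffQuot_comp hd hd' hd''bdd (hC f hf) (hC R hR) hΩb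
  refine ⟨sqrt_integral_sq_le_of_energy_bounds (by positivity) (by positivity) (hL2 S hS St hSt)
    (hL2 P hP Q hQ) (integrableOn_form hΩb ha (hVsmooth S hS) (hVsmooth _ hw) α γ)
    (integrableOn_form hΩb ha (hVsmooth St hSt) (hVsmooth _ hw) α γ)
    (integrableOn_load hΩb ha (hδ P hP) (hC R hR) (hC P hP) (hC _ hw) β γ)
    (integrableOn_load hΩb ha (hδ Q hQ) (hC R hR) (hC Q hQ) (hC _ hw) β γ)
    (hvarS _ hw) (hvarSt _ hw) (fun x => ?_) (fun x => ?_), fun h => ?_⟩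
  · rw [gradient_sub ((hVsmooth S hS).differentiable one_ne_zero x)
      ((hVsmooth St hSt).differentiable one_ne_zero x)]
    exact mul_sq_abs_le_form_sub_form (div_le_div_of_nonneg_right (hcbound _).1 hτ.le) hα.le
  · exact load_sub_load_le hβ.le hγ (abs_diffQuot_sub_diffQuot_le hd hd' hd''bdd _ _ _)
  · have : β * dbar < cl / τ := by rw [lt_div_iff₀ hτ]; linarith
    rw [div_lt_one (by positivity)]
    linarith

/-- contraction estimate for the fixed-point iteration, Lemma 5.1:
one step of the linear fixed-point iteration (Problem 5.1) with stabilization parameter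
`γ`, applied to inputs `P` and `Q` with outputs `S` and `S̃`, contracts the `L²(Ω)`
distance by the factor `(β d̄ + γ)/(c̲/τ + γ)`, which is `< 1` whenever `τ β d̄ < c̲`. -/
theorem fixed_point_iteration_contraction
    {n : ℕ} (Ω : Set (EuclideanSpace ℝ (Fin n)))
    (hΩb : Bornology.IsBounded Ω) (hΩo : IsOpen Ω)
    (α β τ γ : ℝ) (hα : 0 < α) (hβ : 0 < β) (hτ : 0 < τ) (hγ : 0 ≤ γ)
    (c : ℝ → ℝ) (hcmeas : Measurable c)
    (cl cu : ℝ) (hcl : 0 < cl) (hcbound : ∀ x, cl ≤ c x ∧ c x ≤ cu)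
    (d : ℝ → ℝ) (hd : Differentiable ℝ d) (hd' : Differentiable ℝ (deriv d))
    (K dbar : ℝ) (hd'bdd : ∀ x : ℝ, |deriv d x| ≤ K)
    (hd''bdd : ∀ x : ℝ, |deriv (deriv d) x| ≤ dbar)
    (V : Submodule ℝ (EuclideanSpace ℝ (Fin n) → ℝ))
    (hVsmooth : ∀ f ∈ V, ContDiff ℝ 1 f)
    (R : EuclideanSpace ℝ (Fin n) → ℝ) (hR : R ∈ V)
    (P Q S St : EuclideanSpace ℝ (Fin n) → ℝ)
    (hP : P ∈ V) (hQ : Q ∈ V) (hS : S ∈ V) (hSt : St ∈ V)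
    (hvarS : ∀ v ∈ V,
      ∫ x in Ω, (c ‖gradient R x‖ / τ * S x * v x
        + α * ⟪gradient S x, gradient v x⟫ + γ * S x * v x)
      = ∫ x in Ω, (c ‖gradient R x‖ / τ * R x * v x
        - β * diffQuot d (P x) (R x) * v x + γ * P x * v x))
    (hvarSt : ∀ v ∈ V,
      ∫ x in Ω, (c ‖gradient R x‖ / τ * St x * v x
        + α * ⟪gradient St x, gradient v x⟫ + γ * St x * v x)
      = ∫ x in Ω, (c ‖gradient R x‖ / τ * R x * v x
        - β * diffQuot d (Q x) (R x) * v x + γ * Q x * v x)) :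
    Real.sqrt (∫ x in Ω, |S x - St x| ^ 2)
      ≤ (β * dbar + γ) / (cl / τ + γ) * Real.sqrt (∫ x in Ω, |P x - Q x| ^ 2) ∧
    (τ * β * dbar < cl → (β * dbar + γ) / (cl / τ + γ) < 1) :=
  fixed_point_iteration_contraction_general Ω hΩb α β τ γ hα hβ hτ hγ c hcmeas cl cu hcl hcbound d
    hd hd' dbar hd''bdd V hVsmooth R hR P Q S St hP hQ hS hSt hvarS hvarSt
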